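/- Probability coherence as membership in the convex hull of atom-indicator vectors: a finite assessment P : {E₁,…,E_n} → [0,1] extends to a finitely additive probability on algebra({E₁,…,E_n}) if and only if the vector (P(E₁),…,P(E_n)) belongs to the convex hull of the vectors (1_{E_1}(C),…,1_{E_n}(C)) as C ranges over the atoms of algebra({E₁,…,E_n}), where 1_{E_i}(C) = 1 if C ⊆ E_i and 0 otherwise. -/

import Mathlib

open scoped Classical

/-- `𝒜` (a set of subsets of `Ω`) is an algebra of sets. -/
def IsSetAlgebra {Ω : Type*} (𝒜 : Set (Set Ω)) : Prop :=
  ∅ ∈ 𝒜 ∧ Set.univ ∈ 𝒜 ∧ (∀ A ∈ 𝒜, Aᶜ ∈ 𝒜) ∧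
    (∀ A ∈ 𝒜, ∀ B ∈ 𝒜, A ∩ B ∈ 𝒜) ∧ (∀ A ∈ 𝒜, ∀ B ∈ 𝒜, A ∪ B ∈ 𝒜)

/-- The finite family `𝒜` is the algebra generated by `𝒢`. -/
def IsGenAlgebraOf {Ω : Type*} (𝒜 : Finset (Set Ω)) (𝒢 : Set (Set Ω)) : Prop :=
  IsSetAlgebra (↑𝒜 : Set (Set Ω)) ∧ 𝒢 ⊆ ↑𝒜 ∧
    ∀ ℬ : Set (Set Ω), IsSetAlgebra ℬ → 𝒢 ⊆ ℬ → ↑𝒜 ⊆ ℬ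

/-- `C` is an atom of the finite algebra `𝒜`. -/
def IsAtomOf {Ω : Type*} (𝒜 : Finset (Set Ω)) (C : Set Ω) : Prop :=
  C ∈ 𝒜 ∧ C ≠ ∅ ∧ ∀ B ∈ 𝒜, B ⊆ C → B = ∅ ∨ B = C

/-- `P` is a finitely additive probability on the family `𝒜`. -/
def IsFAProb {Ω : Type*} (𝒜 : Set (Set Ω)) (P : Set Ω → ℝ) : Prop :=
  (∀ A ∈ 𝒜, P A ∈ Set.Icc (0 : ℝ) 1) ∧ P ∅ = 0 ∧ P Set.univ = 1 ∧
    ∀ A ∈ 𝒜, ∀ B ∈ 𝒜, A ∩ B = ∅ → P (A ∪ B) = P A + P B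

/-! Every set of the algebra is the disjoint union of the atoms it contains, so a finitely
additive probability `P` is determined by its values on the atoms, and these are convex weights
exhibiting `(P (E i))ᵢ` as a convex combination of the atom indicator vectors. Conversely, the
point mass at an atom is a finitely additive probability whose image is that atom's indicator
vector; since finitely additive probabilities form a convex set and `P ↦ P ∘ E` is linear, every
point of the convex hull is the image of one. -/

section

variable {Ω : Type*}

namespace IsSetAlgebra

variable {𝒜 : Set (Set Ω)}

theorem sUnion_mem (h : IsSetAlgebra 𝒜) {T : Finset (Set Ω)} (hT : ∀ A ∈ T, A ∈ 𝒜) :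
    ⋃₀ (T : Set (Set Ω)) ∈ 𝒜 := by
  induction T using Finset.induction_on with
  | empty => simpa using h.1
  | insert A T _ ih =>
    rw [Finset.coe_insert, Set.sUnion_insert]
    exact h.2.2.2.2 A (hT A (Finset.mem_insert_self A T)) _
      (ih fun B hB => hT B (Finset.mem_insert_of_mem hB))

theorem diff_mem (h : IsSetAlgebra 𝒜) {A B : Set Ω} (hA : A ∈ 𝒜) (hB : B ∈ 𝒜) : A \ B ∈ 𝒜 :=
  h.2.2.2.1 A hA Bᶜ (h.2.2.1 B hB)

end IsSetAlgebra

section Probability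

variable {𝒜 : Set (Set Ω)} {P : Set Ω → ℝ}

theorem IsFAProb.sUnion_eq_sum (h : IsSetAlgebra 𝒜) (hP : IsFAProb 𝒜 P) {T : Finset (Set Ω)}
    (hT : ∀ A ∈ T, A ∈ 𝒜) (hd : (T : Set (Set Ω)).PairwiseDisjoint id) :
    P (⋃₀ (T : Set (Set Ω))) = ∑ A ∈ T, P A := by
  induction T using Finset.induction_on with
  | empty => simpa using hP.2.1
  | insert A T hAT ih =>
    rw [Finset.coe_insert, Set.pairwiseDisjoint_insert_of_notMem (by simpa using hAT)] at hd
    have hT' : ∀ B ∈ T, B ∈ 𝒜 := fun B hB => hT B (Finset.mem_insert_of_mem hB)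
    have hdisj : A ∩ ⋃₀ (T : Set (Set Ω)) = ∅ :=
      Set.disjoint_iff_inter_eq_empty.1 (Set.disjoint_sUnion_right.2 hd.2)
    rw [Finset.coe_insert, Set.sUnion_insert, Finset.sum_insert hAT,
      hP.2.2.2 A (hT A (Finset.mem_insert_self A T)) _ (h.sUnion_mem hT') hdisj, ih hT' hd.1]

theorem convex_setOf_isFAProb : Convex ℝ {P : Set Ω → ℝ | IsFAProb 𝒜 P} := by
  rintro P ⟨hP01, hP0, hP1, hPadd⟩ Q ⟨hQ01, hQ0, hQ1, hQadd⟩ a b ha hb hab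
  refine ⟨fun A hA => convex_Icc 0 1 (hP01 A hA) (hQ01 A hA) ha hb hab, ?_, ?_,
    fun A hA B hB hAB => ?_⟩
  · simp [hP0, hQ0]
  · simp [hP1, hQ1, hab]
  · simp only [Pi.add_apply, Pi.smul_apply, smul_eq_mul, hPadd A hA B hB hAB,
      hQadd A hA B hB hAB]
    ring

end Probability

section Atoms

variable {𝒜 : Finset (Set Ω)} {A C : Set Ω}

theorem IsAtomOf.subset_or_disjoint (h : IsSetAlgebra (𝒜 : Set (Set Ω))) (hC : IsAtomOf 𝒜 C)
    (hA : A ∈ 𝒜) : C ⊆ A ∨ Disjoint C A := by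
  rcases hC.2.2 (C ∩ A) (h.2.2.2.1 C hC.1 A hA) Set.inter_subset_left with h0 | h1
  · exact Or.inr (Set.disjoint_iff_inter_eq_empty.2 h0)
  · exact Or.inl (Set.inter_eq_left.1 h1)

theorem IsAtomOf.subset_of_mem (h : IsSetAlgebra (𝒜 : Set (Set Ω))) (hC : IsAtomOf 𝒜 C)
    (hA : A ∈ 𝒜) {ω : Ω} (hωC : ω ∈ C) (hωA : ω ∈ A) : C ⊆ A :=
  (hC.subset_or_disjoint h hA).resolve_right
    fun hdisj => Set.disjoint_left.1 hdisj hωC hωA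

theorem IsAtomOf.subset_union_iff (h : IsSetAlgebra (𝒜 : Set (Set Ω))) (hC : IsAtomOf 𝒜 C)
    (hA : A ∈ 𝒜) {B : Set Ω} : C ⊆ A ∪ B ↔ C ⊆ A ∨ C ⊆ B := by
  refine ⟨fun hAB => (hC.subset_or_disjoint h hA).imp_right fun hdisj => ?_,
    fun hAB => hAB.elim (·.trans Set.subset_union_left) (·.trans Set.subset_union_right)⟩
  exact fun x hx => (hAB hx).resolve_left (Set.disjoint_left.1 hdisj hx)

theorem IsAtomOf.disjoint_of_ne (h : IsSetAlgebra (𝒜 : Set (Set Ω))) (hC : IsAtomOf 𝒜 C)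
    {C' : Set Ω} (hC' : IsAtomOf 𝒜 C') (hne : C ≠ C') : Disjoint C C' := by
  refine (hC.subset_or_disjoint h hC'.1).resolve_left fun hsub => ?_
  rcases hC'.2.2 C hC.1 hsub with h0 | h1
  exacts [hC.2.1 h0, hne h1]

-- A smallest member of `𝒜` containing `ω` is an atom.
theorem exists_isAtomOf_mem (h : IsSetAlgebra (𝒜 : Set (Set Ω))) (ω : Ω) :
    ∃ C, IsAtomOf 𝒜 C ∧ ω ∈ C := by
  obtain ⟨C, hmin⟩ := (𝒜.filter (ω ∈ ·)).exists_minimal ⟨Set.univ, by simpa using h.2.1⟩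
  obtain ⟨hC, hωC⟩ := Finset.mem_filter.1 hmin.1
  refine ⟨C, ⟨hC, Set.nonempty_iff_ne_empty.1 ⟨ω, hωC⟩, fun B hB hBC => ?_⟩, hωC⟩
  by_cases hωB : ω ∈ B
  · exact Or.inr (hmin.eq_of_le (Finset.mem_filter.2 ⟨hB, hωB⟩) hBC)
  · have hCB : C \ B = C :=
      hmin.eq_of_le (Finset.mem_filter.2 ⟨h.diff_mem hC hB, hωC, hωB⟩) Set.sdiff_subset
    exact Or.inl (Set.subset_empty_iff.1 fun x hxB => (hCB.symm ▸ hBC hxB : x ∈ C \ B).2 hxB)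

theorem IsAtomOf.isFAProb (h : IsSetAlgebra (𝒜 : Set (Set Ω))) (hC : IsAtomOf 𝒜 C) :
    IsFAProb (𝒜 : Set (Set Ω)) fun A => if C ⊆ A then (1 : ℝ) else 0 := by
  refine ⟨fun A _ => by dsimp only; split_ifs <;> simp, by simp [hC.2.1], by simp,
    fun A hA B _ hAB => ?_⟩
  have hnot : ¬(C ⊆ A ∧ C ⊆ B) := fun hCAB =>
    hC.2.1 (Set.subset_empty_iff.1 (hAB ▸ Set.subset_inter hCAB.1 hCAB.2))
  simp only [hC.subset_union_iff h hA]
  split_ifs <;> simp_all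

noncomputable def atomsOf (𝒜 : Finset (Set Ω)) : Finset (Set Ω) := 𝒜.filter (IsAtomOf 𝒜)

theorem mem_atomsOf : C ∈ atomsOf 𝒜 ↔ IsAtomOf 𝒜 C :=
  Finset.mem_filter.trans (and_iff_right_of_imp fun hC => hC.1)

theorem sUnion_atomsOf_subset (h : IsSetAlgebra (𝒜 : Set (Set Ω))) (hA : A ∈ 𝒜) :
    ⋃₀ (((atomsOf 𝒜).filter (· ⊆ A) : Finset (Set Ω)) : Set (Set Ω)) = A := by
  refine Set.Subset.antisymm (Set.sUnion_subset fun C hC => (Finset.mem_filter.1 hC).2) ?_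
  intro ω hωA
  obtain ⟨C, hC, hωC⟩ := exists_isAtomOf_mem h ω
  exact ⟨C, Finset.mem_filter.2 ⟨mem_atomsOf.2 hC, hC.subset_of_mem h hA hωC hωA⟩, hωC⟩

theorem IsFAProb.eq_sum_atomsOf {P : Set Ω → ℝ} (h : IsSetAlgebra (𝒜 : Set (Set Ω)))
    (hP : IsFAProb (𝒜 : Set (Set Ω)) P) (hA : A ∈ 𝒜) :
    P A = ∑ C ∈ atomsOf 𝒜, P C * if C ⊆ A then 1 else 0 := by
  conv_lhs => rw [← sUnion_atomsOf_subset h hA]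
  rw [hP.sUnion_eq_sum h, Finset.sum_filter]
  · simp only [mul_ite, mul_one, mul_zero]
  · exact fun C hC => (mem_atomsOf.1 (Finset.mem_filter.1 hC).1).1
  · exact fun C hC C' hC' hne =>
      (mem_atomsOf.1 (Finset.mem_filter.1 hC).1).disjoint_of_ne h
        (mem_atomsOf.1 (Finset.mem_filter.1 hC').1) hne

end Atoms

section Coherence

variable {ι : Type*} {𝒜 : Finset (Set Ω)}

def atomIndicators (𝒜 : Finset (Set Ω)) (E : ι → Set Ω) : Set (ι → ℝ) :=
  {v | ∃ C : Set Ω, IsAtomOf 𝒜 C ∧ v = fun i => if C ⊆ E i then (1 : ℝ) else 0}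

theorem IsFAProb.comp_mem_convexHull_atomIndicators {E : ι → Set Ω} {P : Set Ω → ℝ}
    (h : IsSetAlgebra (𝒜 : Set (Set Ω))) (hE : ∀ i, E i ∈ 𝒜)
    (hP : IsFAProb (𝒜 : Set (Set Ω)) P) :
    P ∘ E ∈ convexHull ℝ (atomIndicators 𝒜 E) := by
  have hsum : ∑ C ∈ atomsOf 𝒜, P C = 1 := by
    simpa [hP.2.2.1] using (hP.eq_sum_atomsOf h h.2.1).symm
  have hPE : P ∘ E = ∑ C ∈ atomsOf 𝒜, P C • fun i => if C ⊆ E i then (1 : ℝ) else 0 := by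
    funext i
    simp only [Function.comp_apply, hP.eq_sum_atomsOf h (hE i), Finset.sum_apply,
      Pi.smul_apply, smul_eq_mul]
  rw [hPE]
  exact (convex_convexHull ℝ _).sum_mem (fun C hC => (hP.1 C (mem_atomsOf.1 hC).1).1) hsum
    fun C hC => subset_convexHull ℝ _ ⟨C, mem_atomsOf.1 hC, rfl⟩

theorem exists_isFAProb_of_mem_convexHull_atomIndicators {E : ι → Set Ω} {p : ι → ℝ}
    (h : IsSetAlgebra (𝒜 : Set (Set Ω))) (hp : p ∈ convexHull ℝ (atomIndicators 𝒜 E)) :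
    ∃ P : Set Ω → ℝ, IsFAProb (𝒜 : Set (Set Ω)) P ∧ P ∘ E = p := by
  have hconvex := (convex_setOf_isFAProb (𝒜 := (𝒜 : Set (Set Ω)))).linear_image
    (LinearMap.pi fun i => LinearMap.proj (E i))
  refine convexHull_min ?_ hconvex hp
  rintro _ ⟨C, hC, rfl⟩
  exact ⟨_, hC.isFAProb h, rfl⟩

end Coherence

end

theorem stmt_17_general {Ω : Type*} {n : ℕ}
    (E : Fin n → Set Ω) (P : Fin n → ℝ)
    (𝒜 : Finset (Set Ω)) (h𝒜 : IsGenAlgebraOf 𝒜 (Set.range E)) :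
    (∃ P' : Set Ω → ℝ, IsFAProb (↑𝒜) P' ∧ ∀ i, P' (E i) = P i) ↔
      P ∈ convexHull ℝ
        {v : Fin n → ℝ | ∃ C : Set Ω, IsAtomOf 𝒜 C ∧
          v = fun i => if C ⊆ E i then (1 : ℝ) else 0} := by
  obtain ⟨halg, hE, -⟩ := h𝒜
  constructor
  · rintro ⟨P', hP', hP'E⟩
    obtain rfl : P' ∘ E = P := funext hP'E
    exact hP'.comp_mem_convexHull_atomIndicators halg fun i => hE ⟨i, rfl⟩
  · intro hP
    obtain ⟨P', hP', hP'E⟩ := exists_isFAProb_of_mem_convexHull_atomIndicators halg hP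
    exact ⟨P', hP', congrFun hP'E⟩

theorem stmt_17 {Ω : Type*} [Nonempty Ω] {n : ℕ}
    (E : Fin n → Set Ω) (P : Fin n → ℝ) (hP : ∀ i, P i ∈ Set.Icc (0 : ℝ) 1)
    (𝒜 : Finset (Set Ω)) (h𝒜 : IsGenAlgebraOf 𝒜 (Set.range E)) :
    (∃ P' : Set Ω → ℝ, IsFAProb (↑𝒜) P' ∧ ∀ i, P' (E i) = P i) ↔
      P ∈ convexHull ℝ
        {v : Fin n → ℝ | ∃ C : Set Ω, IsAtomOf 𝒜 C ∧
          v = fun i => if C ⊆ E i then (1 : ℝ) else 0} :=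
  stmt_17_general E P 𝒜 h𝒜
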